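/- (Intra-cluster homogeneity) Under the hypotheses of the volume-regularity theorem, for each cluster V_i and all X, Y ⊆ V_i: |w(X,Y) − ρ(V_i)·Vol(X)·Vol(Y)| ≤ C(√(2k)·s + ε)·Vol(V_i), where ρ(V_i) = w(V_i,V_i)/Vol²(V_i) is the relative intra-cluster density and C is a constant independent of n. -/

import Mathlib

/-!
Write `χ_Z = D^{1/2} 1_Z` and `a_i(Z) = ⟨u_i, χ_Z⟩`. Since `χ_Xᵀ M_D χ_Y = w(X,Y) - Vol X · Vol Y`,
the spectral decomposition of `M_D` gives, with `t = Vol X · Vol Y / Vol² V ≤ 1`,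

  `w(X,Y) - ρ(V) Vol X Vol Y = ∑ᵢ μᵢ (aᵢ(X) aᵢ(Y) - t aᵢ(V)²)`.

By Parseval `∑ᵢ aᵢ(Z)² = Vol Z ≤ 1`, so the eigenvalues with `|μᵢ| ≤ ε` contribute at most `2ε`.
For the `k - 1` leading eigenvectors `aᵢ(Z) = ∑_{x ∈ Z} d_x r_{x,i}` is a weighted sum of the
representatives. Replacing `r_{x,i}` by its weighted mean `mᵢ` over the cluster `V` costs at most
`√(varᵢ)` by Cauchy–Schwarz, `mᵢ² ≤ 1 / Vol V`, `|μᵢ| ≤ 2`, and `∑ᵢ varᵢ ≤ S²_k = s²`. Finally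
`Vol V ≥ K c₁` turns the absolute bound into one relative to `Vol V`.
-/

open Matrix Finset

theorem sum_le_sqrt_card_mul_sqrt_sum_sq {ι : Type*} (s : Finset ι) (g : ι → ℝ) :
    ∑ i ∈ s, g i ≤ √(#s : ℝ) * √(∑ i ∈ s, g i ^ 2) := by
  rw [← Real.sqrt_mul (Nat.cast_nonneg _)]
  exact (le_abs_self _).trans (Real.abs_le_sqrt (sq_sum_le_card_mul_sum_sq ..))

theorem abs_sum_mul_mul_sub_mul_sq_le_two_mul {ι : Type*} [Fintype ι] (s : Finset ι)
    {μ a b c : ι → ℝ} {ε t : ℝ} (hε : 0 ≤ ε) (hμ : ∀ i ∈ s, |μ i| ≤ ε) (ht0 : 0 ≤ t) (ht1 : t ≤ 1)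
    (ha : ∑ i, a i ^ 2 ≤ 1) (hb : ∑ i, b i ^ 2 ≤ 1) (hc : ∑ i, c i ^ 2 ≤ 1) :
    |∑ i ∈ s, μ i * (a i * b i - t * c i ^ 2)| ≤ 2 * ε := by
  have hterm : ∀ i ∈ s, |μ i * (a i * b i - t * c i ^ 2)|
      ≤ ε * ((a i ^ 2 + b i ^ 2) / 2 + c i ^ 2) := fun i hi => by
    rw [abs_mul]
    refine mul_le_mul (hμ i hi) (abs_le.mpr ⟨?_, ?_⟩) (abs_nonneg _) hε
    · nlinarith [sq_nonneg (a i + b i), sq_nonneg (c i), mul_nonneg ht0 (sq_nonneg (c i))]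
    · nlinarith [sq_nonneg (a i - b i), sq_nonneg (c i), mul_nonneg ht0 (sq_nonneg (c i))]
  have htotal : ∑ i, ((a i ^ 2 + b i ^ 2) / 2 + c i ^ 2) ≤ 2 := by
    simp only [sum_add_distrib, ← sum_div]; linarith
  calc _ ≤ ∑ i ∈ s, ε * ((a i ^ 2 + b i ^ 2) / 2 + c i ^ 2) :=
        (abs_sum_le_sum_abs _ _).trans (sum_le_sum hterm)
    _ ≤ ε * ∑ i, ((a i ^ 2 + b i ^ 2) / 2 + c i ^ 2) := by
        rw [← mul_sum]
        exact mul_le_mul_of_nonneg_left (sum_le_univ_sum_of_nonneg fun i => by positivity) hε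
    _ ≤ ε * 2 := mul_le_mul_of_nonneg_left htotal hε
    _ = 2 * ε := mul_comm _ _

theorem mul_le_sum_of_mul_le_card {α : Type*} {V : Finset α} {d : α → ℝ} {K c : ℝ} {n : ℕ}
    (hn : n ≠ 0) (hc : 0 ≤ c) (hcard : K * n ≤ #V) (hd : ∀ i ∈ V, c / n ≤ d i) :
    K * c ≤ ∑ i ∈ V, d i :=
  calc K * c = K * n * (c / n) := by field_simp
    _ ≤ #V * (c / n) := by gcongr
    _ = ∑ _i ∈ V, c / n := by rw [sum_const, nsmul_eq_mul]
    _ ≤ ∑ i ∈ V, d i := sum_le_sum hd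

theorem Fin.sum_filter_val_lt {M : Type*} [AddCommMonoid M] {n m : ℕ} (h : m ≤ n)
    (f : Fin n → M) :
    ∑ i ∈ univ.filter (fun i : Fin n => (i : ℕ) < m), f i = ∑ b : Fin m, f (Fin.castLE h b) := by
  refine Eq.trans ?_ (sum_map univ (Fin.castLEEmb h) f)
  congr 1
  ext i
  simp only [mem_filter, mem_univ, true_and, mem_map, Fin.castLEEmb_apply]
  exact ⟨fun hi => ⟨⟨i, hi⟩, rfl⟩, by rintro ⟨b, rfl⟩; exact b.isLt⟩

section Orthonormal

variable {ι : Type*} [Fintype ι] [DecidableEq ι] {u : ι → ι → ℝ}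

theorem eq_sum_dotProduct_smul_of_orthonormal
    (hu : ∀ i j, u i ⬝ᵥ u j = if i = j then 1 else 0) (v : ι → ℝ) :
    v = ∑ i, (u i ⬝ᵥ v) • u i := by
  have hU : of u * (of u)ᵀ = 1 := by
    ext i j
    simpa [mul_apply, one_apply, dotProduct] using hu i j
  calc v = ((of u)ᵀ * of u) *ᵥ v := by rw [mul_eq_one_comm.mp hU, one_mulVec]
    _ = (of u *ᵥ v) ᵥ* of u := by rw [← mulVec_mulVec, ← vecMul_transpose, transpose_transpose]
    _ = ∑ i, (u i ⬝ᵥ v) • u i := vecMul_eq_sum _ _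

theorem dotProduct_mulVec_eq_sum_of_orthonormal_eigenvectors {M : Matrix ι ι ℝ} {μ : ι → ℝ}
    (heig : ∀ i, M *ᵥ u i = μ i • u i)
    (hu : ∀ i j, u i ⬝ᵥ u j = if i = j then 1 else 0) (v w : ι → ℝ) :
    v ⬝ᵥ M *ᵥ w = ∑ i, μ i * (u i ⬝ᵥ v) * (u i ⬝ᵥ w) := by
  conv_lhs => rw [eq_sum_dotProduct_smul_of_orthonormal hu w, mulVec_sum, dotProduct_sum]
  refine sum_congr rfl fun i _ => ?_
  rw [mulVec_smul, heig, dotProduct_smul, dotProduct_smul, smul_eq_mul, smul_eq_mul,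
    dotProduct_comm v]
  ring

theorem sum_sq_dotProduct_of_orthonormal
    (hu : ∀ i j, u i ⬝ᵥ u j = if i = j then 1 else 0) (v : ι → ℝ) :
    ∑ i, (u i ⬝ᵥ v) ^ 2 = v ⬝ᵥ v := by
  simpa [sq] using (dotProduct_mulVec_eq_sum_of_orthonormal_eigenvectors
    (M := 1) (μ := 1) (by simp) hu v v).symm

end Orthonormal

section Modularity

variable {ι : Type*} [Fintype ι]

theorem abs_sum_sum_mul_mul_le {W : Matrix ι ι ℝ} (hsym : W.IsSymm) (hW : ∀ i j, 0 ≤ W i j)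
    (a : ι → ℝ) : |∑ i, ∑ j, W i j * a i * a j| ≤ ∑ i, (∑ j, W i j) * a i ^ 2 := by
  have hsymm : ∀ i j, W j i = W i j := fun i j => by
    simpa using congrFun (congrFun hsym i) j
  have hmid : ∑ i, (∑ j, W i j) * a i ^ 2 = ∑ i, ∑ j, W i j * (a i ^ 2 + a j ^ 2) / 2 := by
    have hswap : ∑ i, ∑ j, W i j * a j ^ 2 = ∑ i, ∑ j, W i j * a i ^ 2 := by
      rw [sum_comm]; simp only [hsymm]
    simp only [sum_mul, ← sum_div, mul_add, sum_add_distrib, hswap]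
    ring
  -- `W i j (a i ^ 2 + a j ^ 2) / 2 ∓ W i j a i a j = W i j (a i ∓ a j) ^ 2 / 2 ≥ 0`
  rw [hmid, abs_le, neg_le]
  simp only [← sum_neg_distrib]
  constructor <;> refine sum_le_sum fun i _ => sum_le_sum fun j _ => ?_
  · nlinarith [mul_nonneg (hW i j) (sq_nonneg (a i + a j))]
  · nlinarith [mul_nonneg (hW i j) (sq_nonneg (a i - a j))]

noncomputable def normalizedModularity (W : Matrix ι ι ℝ) (d : ι → ℝ) : Matrix ι ι ℝ :=
  of (fun i j => W i j / (√(d i) * √(d j))) - vecMulVec (fun i => √(d i)) (fun i => √(d i))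

theorem abs_dotProduct_normalizedModularity_mulVec_self_le {W : Matrix ι ι ℝ} (hsym : W.IsSymm)
    (hW : ∀ i j, 0 ≤ W i j) {d : ι → ℝ} (hd : ∀ i, d i = ∑ j, W i j) (hdpos : ∀ i, 0 < d i)
    (hdsum : ∑ i, d i = 1) (x : ι → ℝ) :
    |x ⬝ᵥ normalizedModularity W d *ᵥ x| ≤ 2 * (x ⬝ᵥ x) := by
  have hsq : ∀ i, √(d i) ^ 2 = d i := fun i => Real.sq_sqrt (hdpos i).le
  have hxx : x ⬝ᵥ x = ∑ i, x i ^ 2 := by simp only [dotProduct, sq]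
  have hquad : x ⬝ᵥ of (fun i j => W i j / (√(d i) * √(d j))) *ᵥ x
      = ∑ i, ∑ j, W i j * (x i / √(d i)) * (x j / √(d j)) := by
    simp only [dotProduct, mulVec, of_apply, mul_sum]
    exact sum_congr rfl fun i _ => sum_congr rfl fun j _ => by ring
  have hrank : x ⬝ᵥ vecMulVec (fun i => √(d i)) (fun i => √(d i)) *ᵥ x
      = (∑ i, √(d i) * x i) ^ 2 := by
    rw [vecMulVec_mulVec, op_smul_eq_smul, dotProduct_smul, smul_eq_mul, sq, dotProduct_comm x]
    rfl
  have hbulk : |∑ i, ∑ j, W i j * (x i / √(d i)) * (x j / √(d j))| ≤ x ⬝ᵥ x := by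
    refine (abs_sum_sum_mul_mul_le hsym hW _).trans_eq ?_
    rw [hxx]
    refine sum_congr rfl fun i _ => ?_
    rw [← hd, div_pow, hsq, mul_div_cancel₀ _ (hdpos i).ne']
  have hrank_le : (∑ i, √(d i) * x i) ^ 2 ≤ x ⬝ᵥ x := by
    refine (sum_mul_sq_le_sq_mul_sq univ _ x).trans_eq ?_
    simp only [hsq, hdsum, one_mul, hxx]
  rw [normalizedModularity, sub_mulVec, dotProduct_sub, hquad, hrank]
  obtain ⟨hbulk_lo, hbulk_hi⟩ := abs_le.mp hbulk
  rw [abs_le]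
  constructor <;> linarith [sq_nonneg (∑ i, √(d i) * x i)]

theorem abs_le_two_of_mulVec_normalizedModularity_eq_smul {W : Matrix ι ι ℝ} (hsym : W.IsSymm)
    (hW : ∀ i j, 0 ≤ W i j) {d : ι → ℝ} (hd : ∀ i, d i = ∑ j, W i j) (hdpos : ∀ i, 0 < d i)
    (hdsum : ∑ i, d i = 1) {μ : ℝ} {v : ι → ℝ} (heig : normalizedModularity W d *ᵥ v = μ • v)
    (hv : v ⬝ᵥ v = 1) : |μ| ≤ 2 := by
  have := abs_dotProduct_normalizedModularity_mulVec_self_le hsym hW hd hdpos hdsum v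
  rwa [heig, dotProduct_smul, smul_eq_mul, hv, mul_one, mul_one] at this

theorem sum_mul_sq_div_sqrt {d : ι → ℝ} (hd : ∀ i, 0 < d i) (v : ι → ℝ) :
    ∑ i, d i * (v i / √(d i)) ^ 2 = v ⬝ᵥ v := by
  simp only [dotProduct, div_pow, Real.sq_sqrt (hd _).le]
  exact sum_congr rfl fun i _ => by field_simp [(hd i).ne']

variable [DecidableEq ι]

noncomputable def sqrtIndicator (d : ι → ℝ) (Z : Finset ι) : ι → ℝ :=
  fun i => if i ∈ Z then √(d i) else 0

theorem dotProduct_sqrtIndicator (v d : ι → ℝ) (Z : Finset ι) :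
    v ⬝ᵥ sqrtIndicator d Z = ∑ i ∈ Z, v i * √(d i) := by
  simp only [dotProduct, sqrtIndicator, mul_ite, mul_zero, sum_ite_mem, univ_inter]

theorem sqrtIndicator_dotProduct_self {d : ι → ℝ} (hd : ∀ i, 0 ≤ d i) (Z : Finset ι) :
    sqrtIndicator d Z ⬝ᵥ sqrtIndicator d Z = ∑ i ∈ Z, d i := by
  rw [dotProduct_sqrtIndicator]
  refine sum_congr rfl fun i hi => ?_
  rw [sqrtIndicator, if_pos hi, Real.mul_self_sqrt (hd i)]

theorem normalizedModularity_mulVec_sqrtIndicator (W : Matrix ι ι ℝ) {d : ι → ℝ}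
    (hd : ∀ i, 0 < d i) (Y : Finset ι) (i : ι) :
    (normalizedModularity W d *ᵥ sqrtIndicator d Y) i
      = (∑ j ∈ Y, W i j) / √(d i) - √(d i) * ∑ j ∈ Y, d j := by
  have hsq : ∀ j, √(d j) * √(d j) = d j := fun j => Real.mul_self_sqrt (hd j).le
  have hne : ∀ j, √(d j) ≠ 0 := fun j => (Real.sqrt_pos.mpr (hd j)).ne'
  rw [normalizedModularity, sub_mulVec, vecMulVec_mulVec, Pi.sub_apply, Pi.smul_apply,
    op_smul_eq_smul, smul_eq_mul, dotProduct_sqrtIndicator, sum_congr rfl fun j _ => hsq j]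
  congr 1
  · rw [mulVec, dotProduct_sqrtIndicator, sum_div]
    refine sum_congr rfl fun j _ => ?_
    rw [of_apply]
    field_simp [hne i, hne j]
  · exact mul_comm _ _

theorem sqrtIndicator_dotProduct_normalizedModularity_mulVec (W : Matrix ι ι ℝ) {d : ι → ℝ}
    (hd : ∀ i, 0 < d i) (X Y : Finset ι) :
    sqrtIndicator d X ⬝ᵥ normalizedModularity W d *ᵥ sqrtIndicator d Y
      = ∑ i ∈ X, ∑ j ∈ Y, W i j - (∑ i ∈ X, d i) * ∑ j ∈ Y, d j := by
  rw [dotProduct_comm, dotProduct_sqrtIndicator, sum_mul, ← sum_sub_distrib]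
  refine sum_congr rfl fun i _ => ?_
  have hne : √(d i) ≠ 0 := (Real.sqrt_pos.mpr (hd i)).ne'
  rw [normalizedModularity_mulVec_sqrtIndicator W hd, sub_mul, div_mul_cancel₀ _ hne,
    mul_right_comm, Real.mul_self_sqrt (hd i).le]

theorem cut_sub_density_mul_eq_sum {W : Matrix ι ι ℝ} {d : ι → ℝ} (hd : ∀ i, 0 < d i)
    {μ : ι → ℝ} {u : ι → ι → ℝ} (heig : ∀ i, normalizedModularity W d *ᵥ u i = μ i • u i)
    (hu : ∀ i j, u i ⬝ᵥ u j = if i = j then 1 else 0) {V : Finset ι} (hV : ∑ i ∈ V, d i ≠ 0)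
    (X Y : Finset ι) :
    (∑ i ∈ X, ∑ j ∈ Y, W i j)
        - (∑ i ∈ V, ∑ j ∈ V, W i j) / (∑ i ∈ V, d i) ^ 2 * (∑ i ∈ X, d i) * (∑ j ∈ Y, d j)
      = ∑ i, μ i * ((u i ⬝ᵥ sqrtIndicator d X) * (u i ⬝ᵥ sqrtIndicator d Y)
          - (∑ i ∈ X, d i) * (∑ j ∈ Y, d j) / (∑ i ∈ V, d i) ^ 2
            * (u i ⬝ᵥ sqrtIndicator d V) ^ 2) := by
  have hcut : ∀ Z Z' : Finset ι, ∑ i ∈ Z, ∑ j ∈ Z', W i j = ∑ i, μ i * (u i ⬝ᵥ sqrtIndicator d Z)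
      * (u i ⬝ᵥ sqrtIndicator d Z') + (∑ i ∈ Z, d i) * ∑ j ∈ Z', d j := fun Z Z' => by
    rw [← dotProduct_mulVec_eq_sum_of_orthonormal_eigenvectors heig hu,
      sqrtIndicator_dotProduct_normalizedModularity_mulVec W hd]
    ring
  set t := (∑ i ∈ X, d i) * (∑ j ∈ Y, d j) / (∑ i ∈ V, d i) ^ 2 with ht
  have hsplit : ∑ i, μ i * ((u i ⬝ᵥ sqrtIndicator d X) * (u i ⬝ᵥ sqrtIndicator d Y)
        - t * (u i ⬝ᵥ sqrtIndicator d V) ^ 2)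
      = ∑ i, μ i * (u i ⬝ᵥ sqrtIndicator d X) * (u i ⬝ᵥ sqrtIndicator d Y)
        - t * ∑ i, μ i * (u i ⬝ᵥ sqrtIndicator d V) * (u i ⬝ᵥ sqrtIndicator d V) := by
    rw [mul_sum, ← sum_sub_distrib]
    exact sum_congr rfl fun i _ => by ring
  rw [hsplit, hcut X Y, hcut V V, ht]
  field_simp
  ring

theorem dotProduct_sqrtIndicator_eq_sum_mul_div {d : ι → ℝ} (hd : ∀ i, 0 < d i) (v : ι → ℝ)
    (Z : Finset ι) : v ⬝ᵥ sqrtIndicator d Z = ∑ i ∈ Z, d i * (v i / √(d i)) := by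
  rw [dotProduct_sqrtIndicator]
  refine sum_congr rfl fun i _ => ?_
  field_simp [(Real.sqrt_pos.mpr (hd i)).ne']
  rw [Real.sq_sqrt (hd i).le]

theorem abs_sum_mul_dotProduct_sqrtIndicator_le_two_mul {d : ι → ℝ} (hd : ∀ i, 0 < d i)
    (hdsum : ∑ i, d i = 1) {u : ι → ι → ℝ} (hu : ∀ i j, u i ⬝ᵥ u j = if i = j then 1 else 0)
    {μ : ι → ℝ} {ε : ℝ} (hε : 0 ≤ ε) (S : Finset ι) (hμ : ∀ i ∈ S, |μ i| ≤ ε)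
    {X Y V : Finset ι} (hX : X ⊆ V) (hY : Y ⊆ V) (hV : 0 < ∑ i ∈ V, d i) :
    |∑ i ∈ S, μ i * ((u i ⬝ᵥ sqrtIndicator d X) * (u i ⬝ᵥ sqrtIndicator d Y)
        - (∑ i ∈ X, d i) * (∑ j ∈ Y, d j) / (∑ i ∈ V, d i) ^ 2 * (u i ⬝ᵥ sqrtIndicator d V) ^ 2)|
      ≤ 2 * ε := by
  have hvol0 : ∀ Z : Finset ι, 0 ≤ ∑ i ∈ Z, d i := fun Z => sum_nonneg fun i _ => (hd i).le
  have hmono : ∀ {Z}, Z ⊆ V → ∑ i ∈ Z, d i ≤ ∑ i ∈ V, d i := fun hZ =>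
    sum_le_sum_of_subset_of_nonneg hZ fun i _ _ => (hd i).le
  have hsq : ∀ Z, ∑ i, (u i ⬝ᵥ sqrtIndicator d Z) ^ 2 ≤ 1 := fun Z => by
    rw [sum_sq_dotProduct_of_orthonormal hu, sqrtIndicator_dotProduct_self fun i => (hd i).le]
    exact hdsum ▸ sum_le_univ_sum_of_nonneg fun i => (hd i).le
  refine abs_sum_mul_mul_sub_mul_sq_le_two_mul S hε hμ
    (div_nonneg (mul_nonneg (hvol0 X) (hvol0 Y)) (sq_nonneg _)) ?_ (hsq X) (hsq Y) (hsq V)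
  rw [div_le_one (by positivity), sq]
  exact mul_le_mul (hmono hX) (hmono hY) (hvol0 Y) hV.le

end Modularity

section WeightedMean

variable {α : Type*} {d : α → ℝ} {V : Finset α}

noncomputable def weightedMean (d f : α → ℝ) (V : Finset α) : ℝ :=
  (∑ x ∈ V, d x * f x) / ∑ x ∈ V, d x

noncomputable def weightedVar (d f : α → ℝ) (V : Finset α) : ℝ :=
  ∑ x ∈ V, d x * (f x - weightedMean d f V) ^ 2

theorem weightedVar_nonneg (hd : ∀ x ∈ V, 0 ≤ d x) (f : α → ℝ) : 0 ≤ weightedVar d f V :=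
  sum_nonneg fun x hx => mul_nonneg (hd x hx) (sq_nonneg _)

theorem weightedVar_eq_sum_mul_sq_sub (d f : α → ℝ) (V : Finset α) :
    weightedVar d f V = ∑ x ∈ V, d x * f x ^ 2 - weightedMean d f V ^ 2 * ∑ x ∈ V, d x := by
  have hmean : weightedMean d f V * ∑ x ∈ V, d x * f x
      = weightedMean d f V ^ 2 * ∑ x ∈ V, d x := by
    rcases eq_or_ne (∑ x ∈ V, d x) 0 with h | h
    · simp [weightedMean, h]
    · rw [weightedMean]; field_simp
  have hexp : weightedVar d f V = ∑ x ∈ V, d x * f x ^ 2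
      - 2 * (weightedMean d f V * ∑ x ∈ V, d x * f x) + weightedMean d f V ^ 2 * ∑ x ∈ V, d x := by
    simp only [weightedVar, mul_sum, ← sum_sub_distrib, ← sum_add_distrib]
    exact sum_congr rfl fun x _ => by ring
  rw [hexp, hmean]
  ring

theorem weightedVar_le_sum_mul_sq (hd : ∀ x ∈ V, 0 ≤ d x) (f : α → ℝ) :
    weightedVar d f V ≤ ∑ x ∈ V, d x * f x ^ 2 := by
  rw [weightedVar_eq_sum_mul_sq_sub]
  have : 0 ≤ weightedMean d f V ^ 2 * ∑ x ∈ V, d x := mul_nonneg (sq_nonneg _) (sum_nonneg hd)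
  linarith

theorem sq_weightedMean_mul_le (hd : ∀ x ∈ V, 0 ≤ d x) (f : α → ℝ) :
    weightedMean d f V ^ 2 * ∑ x ∈ V, d x ≤ ∑ x ∈ V, d x * f x ^ 2 := by
  have := weightedVar_nonneg hd f
  rw [weightedVar_eq_sum_mul_sq_sub] at this
  linarith

theorem abs_sum_mul_sub_weightedMean_mul_le (hd : ∀ x ∈ V, 0 ≤ d x) (f : α → ℝ) {Z : Finset α}
    (hZ : Z ⊆ V) :
    |∑ x ∈ Z, d x * f x - weightedMean d f V * ∑ x ∈ Z, d x|
      ≤ √(∑ x ∈ Z, d x) * √(weightedVar d f V) := by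
  have hdZ : ∀ x ∈ Z, 0 ≤ d x := fun x hx => hd x (hZ hx)
  rw [← Real.sqrt_mul (sum_nonneg hdZ), mul_sum, ← sum_sub_distrib]
  refine Real.abs_le_sqrt ?_
  calc (∑ x ∈ Z, (d x * f x - weightedMean d f V * d x)) ^ 2
      ≤ (∑ x ∈ Z, d x) * ∑ x ∈ Z, d x * (f x - weightedMean d f V) ^ 2 :=
        sum_sq_le_sum_mul_sum_of_sq_le_mul Z hdZ
          (fun x hx => mul_nonneg (hdZ x hx) (sq_nonneg _)) fun x _ => (by ring : _ = _).le
    _ ≤ (∑ x ∈ Z, d x) * weightedVar d f V :=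
        mul_le_mul_of_nonneg_left (sum_le_sum_of_subset_of_nonneg hZ
          fun x hx _ => mul_nonneg (hd x hx) (sq_nonneg _)) (sum_nonneg hdZ)

/-- Writing each sum over `Z ⊆ V` as `m·Vol(Z)` plus a deviation of size at most `√(var)`,
the product expands into two cross terms and one quadratic term. -/
theorem abs_mul_sub_mul_sq_le_weightedVar (hd : ∀ x ∈ V, 0 ≤ d x) (f : α → ℝ)
    (hV : ∑ x ∈ V, d x ≠ 0) {X Y : Finset α} (hX : X ⊆ V) (hY : Y ⊆ V)
    (hX1 : ∑ x ∈ X, d x ≤ 1) (hY1 : ∑ x ∈ Y, d x ≤ 1) :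
    |(∑ x ∈ X, d x * f x) * (∑ x ∈ Y, d x * f x)
        - (∑ x ∈ X, d x) * (∑ x ∈ Y, d x) / (∑ x ∈ V, d x) ^ 2 * (∑ x ∈ V, d x * f x) ^ 2|
      ≤ 2 * |weightedMean d f V| * √(weightedVar d f V) + weightedVar d f V := by
  have hPV : ∑ x ∈ V, d x * f x = weightedMean d f V * ∑ x ∈ V, d x := by
    rw [weightedMean, div_mul_cancel₀ _ hV]
  set m := weightedMean d f V
  set q := weightedVar d f V
  have hq : 0 ≤ q := weightedVar_nonneg hd f
  have hdev : ∀ Z ⊆ V, ∑ x ∈ Z, d x ≤ 1 → |∑ x ∈ Z, d x * f x - m * ∑ x ∈ Z, d x| ≤ √q :=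
    fun Z hZ hZ1 => (abs_sum_mul_sub_weightedMean_mul_le hd f hZ).trans
      (mul_le_of_le_one_left (Real.sqrt_nonneg _) (Real.sqrt_le_one.mpr hZ1))
  have hvol : ∀ Z ⊆ V, 0 ≤ ∑ x ∈ Z, d x := fun Z hZ => sum_nonneg fun x hx => hd x (hZ hx)
  set vX := ∑ x ∈ X, d x
  set vY := ∑ x ∈ Y, d x
  set eX := ∑ x ∈ X, d x * f x - m * vX
  set eY := ∑ x ∈ Y, d x * f x - m * vY
  have hsplit : (∑ x ∈ X, d x * f x) * (∑ x ∈ Y, d x * f x)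
      - vX * vY / (∑ x ∈ V, d x) ^ 2 * (∑ x ∈ V, d x * f x) ^ 2
      = m * vX * eY + m * vY * eX + eX * eY := by
    rw [hPV]; field_simp; ring
  have hmX : |m * vX| ≤ |m| := by
    rw [abs_mul, abs_of_nonneg (hvol X hX)]; exact mul_le_of_le_one_right (abs_nonneg m) hX1
  have hmY : |m * vY| ≤ |m| := by
    rw [abs_mul, abs_of_nonneg (hvol Y hY)]; exact mul_le_of_le_one_right (abs_nonneg m) hY1
  have heX := hdev X hX hX1
  have heY := hdev Y hY hY1
  rw [hsplit]
  calc |m * vX * eY + m * vY * eX + eX * eY|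
      ≤ |m * vX| * |eY| + |m * vY| * |eX| + |eX| * |eY| := by
        simp only [← abs_mul]; exact abs_add_three _ _ _
    _ ≤ |m| * √q + |m| * √q + √q * √q := by gcongr
    _ = 2 * |m| * √q + q := by rw [Real.mul_self_sqrt hq]; ring

/-- Summing the bounds of `abs_mul_sub_mul_sq_le_weightedVar` over `b : κ` gives a multiple of
`√(∑ b, var_b)`: the cross terms by Cauchy–Schwarz, the quadratic ones because each `var_b ≤ 1`. -/
theorem abs_sum_mul_sub_le_sqrt_sum_weightedVar {κ : Type*} [Fintype κ] (hd : ∀ x ∈ V, 0 ≤ d x)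
    (f : κ → α → ℝ) (hf : ∀ b, ∑ x ∈ V, d x * f b x ^ 2 ≤ 1) {μ : κ → ℝ} (hμ : ∀ b, |μ b| ≤ 2)
    {X Y : Finset α} (hX : X ⊆ V) (hY : Y ⊆ V) (hX1 : ∑ x ∈ X, d x ≤ 1) (hY1 : ∑ x ∈ Y, d x ≤ 1)
    {β : ℝ} (hβ : 0 < β) (hV : β ^ 2 ≤ ∑ x ∈ V, d x) :
    |∑ b, μ b * ((∑ x ∈ X, d x * f b x) * (∑ x ∈ Y, d x * f b x)
        - (∑ x ∈ X, d x) * (∑ x ∈ Y, d x) / (∑ x ∈ V, d x) ^ 2 * (∑ x ∈ V, d x * f b x) ^ 2)|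
      ≤ (4 / β + 2) * √(Fintype.card κ) * √(∑ b, weightedVar d (f b) V) := by
  set q := fun b => weightedVar d (f b) V
  have hq0 : ∀ b, 0 ≤ q b := fun b => weightedVar_nonneg hd (f b)
  have hq1 : ∀ b, q b ≤ 1 := fun b => (weightedVar_le_sum_mul_sq hd (f b)).trans (hf b)
  have hVne : ∑ x ∈ V, d x ≠ 0 := (lt_of_lt_of_le (by positivity) hV).ne'
  have hmean : ∀ b, |weightedMean d (f b) V| ≤ 1 / β := fun b => by
    have hsq : (|weightedMean d (f b) V| * β) ^ 2 ≤ 1 := by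
      rw [mul_pow, sq_abs]
      exact (mul_le_mul_of_nonneg_left hV (sq_nonneg _)).trans
        ((sq_weightedMean_mul_le hd (f b)).trans (hf b))
    rw [le_div_iff₀ hβ]
    exact (sq_le_one_iff₀ (by positivity)).mp hsq
  have hterm : ∀ b, |μ b * ((∑ x ∈ X, d x * f b x) * (∑ x ∈ Y, d x * f b x)
        - (∑ x ∈ X, d x) * (∑ x ∈ Y, d x) / (∑ x ∈ V, d x) ^ 2 * (∑ x ∈ V, d x * f b x) ^ 2)|
      ≤ 2 * (2 / β * √(q b) + q b) := fun b => by
    rw [abs_mul]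
    calc |μ b| * |_| ≤ 2 * (2 * |weightedMean d (f b) V| * √(q b) + q b) :=
          mul_le_mul (hμ b) (abs_mul_sub_mul_sq_le_weightedVar hd (f b) hVne hX hY hX1 hY1)
            (abs_nonneg _) zero_le_two
      _ ≤ 2 * (2 * (1 / β) * √(q b) + q b) := by gcongr; exact hmean b
      _ = 2 * (2 / β * √(q b) + q b) := by ring
  have hsqrt : ∑ b, √(q b) ≤ √(Fintype.card κ) * √(∑ b, q b) := by
    simpa only [Real.sq_sqrt (hq0 _), card_univ] using
      sum_le_sqrt_card_mul_sqrt_sum_sq univ (fun b => √(q b))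
  have hsum : ∑ b, q b ≤ √(Fintype.card κ) * √(∑ b, q b) := by
    refine (sum_le_sqrt_card_mul_sqrt_sum_sq univ q).trans ?_
    rw [card_univ]
    gcongr with b
    nlinarith [hq0 b, hq1 b]
  calc _ ≤ ∑ b, 2 * (2 / β * √(q b) + q b) :=
        (abs_sum_le_sum_abs _ _).trans (sum_le_sum fun b _ => hterm b)
    _ = 4 / β * ∑ b, √(q b) + 2 * ∑ b, q b := by
        simp only [mul_add, sum_add_distrib, ← mul_sum]; ring
    _ ≤ 4 / β * (√(Fintype.card κ) * √(∑ b, q b)) + 2 * (√(Fintype.card κ) * √(∑ b, q b)) := by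
        gcongr
    _ = _ := by ring

end WeightedMean

section KVariance

variable {α κ ℓ : Type*} [Fintype α] [Fintype κ] [Fintype ℓ] [DecidableEq ℓ]

noncomputable def weightedKVariance (d : α → ℝ) (r : α → κ → ℝ) (P : α → ℓ) : ℝ :=
  ∑ a, ∑ j ∈ univ.filter (fun j => P j = a), d j *
    ∑ b, (r j b - weightedMean d (fun l => r l b) (univ.filter (fun l => P l = a))) ^ 2

theorem sum_weightedVar_le_weightedKVariance {d : α → ℝ} (hd : ∀ x, 0 ≤ d x) (r : α → κ → ℝ)
    (P : α → ℓ) (a : ℓ) :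
    ∑ b, weightedVar d (fun j => r j b) (univ.filter (fun j => P j = a))
      ≤ weightedKVariance d r P := by
  have hcluster : ∀ a, ∑ j ∈ univ.filter (fun j => P j = a), d j *
      ∑ b, (r j b - weightedMean d (fun l => r l b) (univ.filter (fun l => P l = a))) ^ 2
      = ∑ b, weightedVar d (fun j => r j b) (univ.filter (fun j => P j = a)) := fun a => by
    simp only [weightedVar, mul_sum]
    exact sum_comm
  simp only [weightedKVariance, hcluster]
  exact single_le_sum (f := fun a => ∑ b, weightedVar d (fun j => r j b) (univ.filter (P · = a)))
    (fun a _ => sum_nonneg fun b _ => weightedVar_nonneg (fun x _ => hd x) _) (mem_univ a)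

end KVariance

theorem abs_cut_sub_density_mul_le {n k : ℕ} (hk : k ≤ n) {W : Matrix (Fin n) (Fin n) ℝ}
    (hsym : W.IsSymm) (hW : ∀ i j, 0 ≤ W i j) {d : Fin n → ℝ} (hd : ∀ i, d i = ∑ j, W i j)
    (hdpos : ∀ i, 0 < d i) (hdsum : ∑ i, d i = 1) {μ : Fin n → ℝ} {u : Fin n → Fin n → ℝ}
    (heig : ∀ i, normalizedModularity W d *ᵥ u i = μ i • u i)
    (hu : ∀ i j, u i ⬝ᵥ u j = if i = j then 1 else 0) {ε : ℝ} (hε : 0 ≤ ε)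
    (hgap : ∀ i : Fin n, k ≤ (i : ℕ) → |μ i| ≤ ε) {r : Fin n → Fin k → ℝ}
    (hr : ∀ j b, r j b = u (Fin.castLE hk b) j / √(d j)) {X Y V : Finset (Fin n)} (hX : X ⊆ V)
    (hY : Y ⊆ V) {β : ℝ} (hβ : 0 < β) (hV : β ^ 2 ≤ ∑ i ∈ V, d i) :
    |(∑ i ∈ X, ∑ j ∈ Y, W i j)
        - (∑ i ∈ V, ∑ j ∈ V, W i j) / (∑ i ∈ V, d i) ^ 2 * (∑ i ∈ X, d i) * (∑ j ∈ Y, d j)|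
      ≤ (4 / β + 2) * √(k : ℝ) * √(∑ b, weightedVar d (fun j => r j b) V) + 2 * ε := by
  have hVpos : 0 < ∑ i ∈ V, d i := (by positivity : 0 < β ^ 2).trans_le hV
  have hvol1 : ∀ Z : Finset (Fin n), ∑ i ∈ Z, d i ≤ 1 := fun Z =>
    hdsum ▸ sum_le_univ_sum_of_nonneg fun i => (hdpos i).le
  have hnorm : ∀ i, u i ⬝ᵥ u i = 1 := fun i => by simpa using hu i i
  have hA : ∀ b Z, u (Fin.castLE hk b) ⬝ᵥ sqrtIndicator d Z = ∑ j ∈ Z, d j * r j b :=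
    fun b Z => by simp only [dotProduct_sqrtIndicator_eq_sum_mul_div hdpos, hr]
  have hr1 : ∀ b, ∑ j ∈ V, d j * r j b ^ 2 ≤ 1 := fun b => by
    refine (sum_le_univ_sum_of_nonneg fun j => mul_nonneg (hdpos j).le (sq_nonneg _)).trans_eq ?_
    simp only [hr, sum_mul_sq_div_sqrt hdpos, hnorm]
  have hlarge := abs_sum_mul_sub_le_sqrt_sum_weightedVar (fun x _ => (hdpos x).le)
    (fun b j => r j b) hr1
    (fun b => abs_le_two_of_mulVec_normalizedModularity_eq_smul hsym hW hd hdpos hdsum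
      (heig (Fin.castLE hk b)) (hnorm _)) hX hY (hvol1 X) (hvol1 Y) hβ hV
  have hsmall := abs_sum_mul_dotProduct_sqrtIndicator_le_two_mul hdpos hdsum hu hε
    (univ.filter fun i : Fin n => ¬ (i : ℕ) < k)
    (fun i hi => hgap i (not_lt.mp (mem_filter.mp hi).2)) hX hY hVpos
  rw [cut_sub_density_mul_eq_sum hdpos heig hu hVpos.ne',
    ← sum_filter_add_sum_filter_not univ (fun i : Fin n => (i : ℕ) < k), Fin.sum_filter_val_lt hk]
  simp only [hA, Fintype.card_fin] at hlarge ⊢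
  exact (abs_add_le _ _).trans (add_le_add hlarge hsmall)

theorem intra_cluster_homogeneity_general (k : ℕ) (c1 c2 K : ℝ)
    (hc1 : 0 < c1) (hK : 0 < K) :
    -- the constant C is independent of n (and of the graph)
    ∃ C : ℝ, 0 < C ∧
      ∀ (n : ℕ) (hkn : k ≤ n) (W : Matrix (Fin n) (Fin n) ℝ),
        W.IsSymm → (∀ i j, 0 ≤ W i j) →
        ∀ (d : Fin n → ℝ), (∀ i, d i = ∑ j, W i j) → (∀ i, 0 < d i) →
        (∑ i, d i) = 1 →
        -- no dominant vertices: d_i = Θ(1/n)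
        (∀ i, c1 / n ≤ d i ∧ d i ≤ c2 / n) →
        ∀ (MD : Matrix (Fin n) (Fin n) ℝ),
          MD = (Matrix.of fun i j => W i j / (Real.sqrt (d i) * Real.sqrt (d j)))
            - vecMulVec (fun i => Real.sqrt (d i)) (fun i => Real.sqrt (d i)) →
        -- eigenvalues of M_D in decreasing absolute value, orthonormal eigenvectors
        ∀ (μ : Fin n → ℝ) (u : Fin n → Fin n → ℝ),
          (∀ i, MD.mulVec (u i) = μ i • u i) →
          (∀ i j, (u i) ⬝ᵥ (u j) = if i = j then 1 else 0) →
          (∀ i j : Fin n, i ≤ j → |μ j| ≤ |μ i|) →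
        -- spectral gap: |μ_{k-1}| > ε ≥ |μ_k|
        ∀ ε : ℝ, 0 ≤ ε →
          (∀ i : Fin n, (i : ℕ) < k - 1 → ε < |μ i|) →
          (∀ i : Fin n, k - 1 ≤ (i : ℕ) → |μ i| ≤ ε) →
        -- optimal vertex representatives: rows of X* = (D^{-1/2}u_1,…,D^{-1/2}u_{k-1})
        ∀ (r : Fin n → Fin (k - 1) → ℝ),
          (∀ j a, r j a =
            u (Fin.castLE (le_trans (Nat.sub_le k 1) hkn) a) j / Real.sqrt (d j)) →
        -- weighted k-variance of the representatives for a partition P'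
        ∀ (SV : (Fin n → Fin k) → ℝ),
          (∀ P' : Fin n → Fin k, SV P' = ∑ a : Fin k,
            ∑ j ∈ Finset.univ.filter (fun j => P' j = a), d j *
              ∑ b : Fin (k - 1),
                (r j b -
                  (∑ l ∈ Finset.univ.filter (fun l => P' l = a), d l * r l b) /
                    (∑ l ∈ Finset.univ.filter (fun l => P' l = a), d l)) ^ 2) →
        -- P minimizes the weighted k-variance, clusters of size ≥ Kn
        ∀ P : Fin n → Fin k,
          (∀ P' : Fin n → Fin k, SV P ≤ SV P') →
          (∀ a : Fin k,
            K * n ≤ ((Finset.univ.filter (fun j => P j = a)).card : ℝ)) →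
        ∀ s : ℝ, s = Real.sqrt (SV P) →
        -- conclusion: intra-cluster homogeneity for each cluster
        ∀ a : Fin k,
        ∀ X Y : Finset (Fin n), (∀ x ∈ X, P x = a) → (∀ y ∈ Y, P y = a) →
          |(∑ i ∈ X, ∑ j ∈ Y, W i j) -
            ((∑ i ∈ Finset.univ.filter (fun i => P i = a),
                ∑ j ∈ Finset.univ.filter (fun j => P j = a), W i j) /
              (∑ i ∈ Finset.univ.filter (fun i => P i = a), d i) ^ 2) *
            (∑ i ∈ X, d i) * (∑ j ∈ Y, d j)| ≤
          C * (Real.sqrt (2 * k) * s + ε) *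
            (∑ i ∈ Finset.univ.filter (fun i => P i = a), d i) := by
  set β := √(K * c1)
  have hKc1 : 0 < K * c1 := mul_pos hK hc1
  have hβ : 0 < β := Real.sqrt_pos.mpr hKc1
  refine ⟨(4 / β + 2) / (K * c1), by positivity, ?_⟩
  intro n hkn W hsym hW d hd hdpos hdsum hdrange MD hMD μ u heig hu _ ε hε _ hgap r hr SV hSV
    P _ hsize s hs a X Y hXa hYa
  obtain rfl : MD = normalizedModularity W d := hMD
  subst hs
  set V := univ.filter (fun i => P i = a)
  have hn : n ≠ 0 := by rintro rfl; simp at hdsum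
  have hvolV : K * c1 ≤ ∑ i ∈ V, d i :=
    mul_le_sum_of_mul_le_card hn hc1.le (hsize a) fun i _ => (hdrange i).1
  have hbound := abs_cut_sub_density_mul_le _ hsym hW hd hdpos hdsum heig hu hε hgap hr
    (fun x hx => mem_filter.mpr ⟨mem_univ x, hXa x hx⟩)
    (fun y hy => mem_filter.mpr ⟨mem_univ y, hYa y hy⟩) hβ ((Real.sq_sqrt hKc1.le).trans_le hvolV)
  have hvar : √(∑ b, weightedVar d (fun j => r j b) V) ≤ √(SV P) := Real.sqrt_le_sqrt
    ((sum_weightedVar_le_weightedKVariance (fun x => (hdpos x).le) r P a).trans_eq (hSV P).symm)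
  have hsqrt_k : √((k - 1 : ℕ) : ℝ) ≤ √(2 * k) := by
    have : ((k - 1 : ℕ) : ℝ) ≤ k := by exact_mod_cast Nat.sub_le k 1
    exact Real.sqrt_le_sqrt (by linarith)
  calc _ ≤ (4 / β + 2) * (√((k - 1 : ℕ) : ℝ) * √(∑ b, weightedVar d (fun j => r j b) V))
        + 2 * ε := by rwa [← mul_assoc]
    _ ≤ (4 / β + 2) * (√(2 * k) * √(SV P)) + (4 / β + 2) * ε := by
        gcongr
        linarith [div_pos four_pos hβ]
    _ = (4 / β + 2) / (K * c1) * (√(2 * k) * √(SV P) + ε) * (K * c1) := by field_simp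
    _ ≤ _ := by gcongr

/-- intra_cluster_homogeneity -/
theorem intra_cluster_homogeneity (k : ℕ) (hk : 2 ≤ k) (c1 c2 K : ℝ)
    (hc1 : 0 < c1) (hc2 : 0 < c2) (hK : 0 < K) :
    -- the constant C is independent of n (and of the graph)
    ∃ C : ℝ, 0 < C ∧
      ∀ (n : ℕ) (hkn : k ≤ n) (W : Matrix (Fin n) (Fin n) ℝ),
        W.IsSymm → (∀ i j, 0 ≤ W i j) →
        ∀ (d : Fin n → ℝ), (∀ i, d i = ∑ j, W i j) → (∀ i, 0 < d i) →
        (∑ i, d i) = 1 →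
        -- no dominant vertices: d_i = Θ(1/n)
        (∀ i, c1 / n ≤ d i ∧ d i ≤ c2 / n) →
        ∀ (MD : Matrix (Fin n) (Fin n) ℝ),
          MD = (Matrix.of fun i j => W i j / (Real.sqrt (d i) * Real.sqrt (d j)))
            - vecMulVec (fun i => Real.sqrt (d i)) (fun i => Real.sqrt (d i)) →
        -- eigenvalues of M_D in decreasing absolute value, orthonormal eigenvectors
        ∀ (μ : Fin n → ℝ) (u : Fin n → Fin n → ℝ),
          (∀ i, MD.mulVec (u i) = μ i • u i) →
          (∀ i j, (u i) ⬝ᵥ (u j) = if i = j then 1 else 0) →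
          (∀ i j : Fin n, i ≤ j → |μ j| ≤ |μ i|) →
        -- spectral gap: |μ_{k-1}| > ε ≥ |μ_k|
        ∀ ε : ℝ, 0 ≤ ε →
          (∀ i : Fin n, (i : ℕ) < k - 1 → ε < |μ i|) →
          (∀ i : Fin n, k - 1 ≤ (i : ℕ) → |μ i| ≤ ε) →
        -- optimal vertex representatives: rows of X* = (D^{-1/2}u_1,…,D^{-1/2}u_{k-1})
        ∀ (r : Fin n → Fin (k - 1) → ℝ),
          (∀ j a, r j a =
            u (Fin.castLE (le_trans (Nat.sub_le k 1) hkn) a) j / Real.sqrt (d j)) →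
        -- weighted k-variance of the representatives for a partition P'
        ∀ (SV : (Fin n → Fin k) → ℝ),
          (∀ P' : Fin n → Fin k, SV P' = ∑ a : Fin k,
            ∑ j ∈ Finset.univ.filter (fun j => P' j = a), d j *
              ∑ b : Fin (k - 1),
                (r j b -
                  (∑ l ∈ Finset.univ.filter (fun l => P' l = a), d l * r l b) /
                    (∑ l ∈ Finset.univ.filter (fun l => P' l = a), d l)) ^ 2) →
        -- P minimizes the weighted k-variance, clusters of size ≥ Kn
        ∀ P : Fin n → Fin k,
          (∀ P' : Fin n → Fin k, SV P ≤ SV P') →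
          (∀ a : Fin k,
            K * n ≤ ((Finset.univ.filter (fun j => P j = a)).card : ℝ)) →
        ∀ s : ℝ, s = Real.sqrt (SV P) →
        -- conclusion: intra-cluster homogeneity for each cluster
        ∀ a : Fin k,
        ∀ X Y : Finset (Fin n), (∀ x ∈ X, P x = a) → (∀ y ∈ Y, P y = a) →
          |(∑ i ∈ X, ∑ j ∈ Y, W i j) -
            ((∑ i ∈ Finset.univ.filter (fun i => P i = a),
                ∑ j ∈ Finset.univ.filter (fun j => P j = a), W i j) /
              (∑ i ∈ Finset.univ.filter (fun i => P i = a), d i) ^ 2) *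
            (∑ i ∈ X, d i) * (∑ j ∈ Y, d j)| ≤
          C * (Real.sqrt (2 * k) * s + ε) *
            (∑ i ∈ Finset.univ.filter (fun i => P i = a), d i) :=
  intra_cluster_homogeneity_general k c1 c2 K hc1 hK
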